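/- arXiv:2309.03757 — 2 statements merged into one kernel-verified Lean document; each statement's English description precedes it below -/
import Mathlib

section
/- There exists a compact geodesic metric space X whose cop number is infinite, i.e. for every k ∈ ℕ, k cops do not have a winning strategy in the game of Cops and Robber on X. Moreover, for every k ∈ ℕ the robber has a strategy against k cops that uses a constant agility function and guarantees that inf_n min_{i≤k} d(r^n, c^n_i) > 0 against every cop play. -/
/-!
Game of Cops and Robber on metric spaces, following Mohar, formalized relative to an
explicit distance function `d : Y → Y → ℝ`.
-/

open Set Filter Topology

/-- The length of (the restriction to `[0,1]` of) a map `p : ℝ → Y` with respect to an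
extended-real-valued cost function `c`, defined as the supremum over all finite monotone
partitions of `[0,1]` of the sums of the costs of consecutive points. -/
noncomputable def elen {Y : Type*} (c : Y → Y → ENNReal) (p : ℝ → Y) : ENNReal :=
  ⨆ q : ℕ × {u : ℕ → ℝ // Monotone u ∧ ∀ i, u i ∈ Set.Icc (0 : ℝ) 1},
    ∑ i ∈ Finset.range q.1, c (p (q.2.1 i)) (p (q.2.1 (i + 1)))

/-- Continuity on `[0,1]` of a map `p : ℝ → Y` with respect to a cost function `c`,
stated in `ε`-`δ` form. -/
def econt {Y : Type*} (c : Y → Y → ENNReal) (p : ℝ → Y) : Prop :=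
  ∀ t ∈ Set.Icc (0 : ℝ) 1, ∀ ε : ENNReal, 0 < ε →
    ∃ δ : ℝ, 0 < δ ∧ ∀ t' ∈ Set.Icc (0 : ℝ) 1, |t' - t| < δ → c (p t) (p t') < ε

/-- `d` is a metric on `Y`. -/
def IsMetricD (Y : Type*) (d : Y → Y → ℝ) : Prop :=
  (∀ x, d x x = 0) ∧ (∀ x y, d x y = 0 → x = y) ∧
    (∀ x y, d x y = d y x) ∧ (∀ x y z, d x z ≤ d x y + d y z)

/-- Compactness of the metric space `(Y,d)`, in its sequential form: every sequence has a
convergent subsequence. -/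
def CompactD (Y : Type*) (d : Y → Y → ℝ) : Prop :=
  ∀ u : ℕ → Y, ∃ (x : Y) (φ : ℕ → ℕ), StrictMono φ ∧
    Filter.Tendsto (fun n => d (u (φ n)) x) Filter.atTop (nhds 0)

/-- `(Y,d)` is a geodesic metric space: any two points `x, y` are joined by a continuous
path `p : [0,1] → Y` whose length equals `d x y`. -/
def IsGeodesicD (Y : Type*) (d : Y → Y → ℝ) : Prop :=
  ∀ x y : Y, ∃ p : ℝ → Y,
    econt (fun a b => ENNReal.ofReal (d a b)) p ∧ p 0 = x ∧ p 1 = y ∧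
      elen (fun a b => ENNReal.ofReal (d a b)) p = ENNReal.ofReal (d x y)

/-- A game space is a (nonempty) compact geodesic metric space. -/
def GameSpaceD (Y : Type*) (d : Y → Y → ℝ) : Prop :=
  Nonempty Y ∧ IsMetricD Y d ∧ CompactD Y d ∧ IsGeodesicD Y d

/-- An agility function: positive, with divergent sum. -/
def IsAgility (τ : ℕ → ℝ) : Prop := (∀ n, 0 < τ n) ∧ ¬ Summable τ

/-- The trajectory of the `k` cops determined by initial positions `c0`, a cop strategy `σ`
(where `σ n` computes the cops' positions at step `n+1` from the robber's positions
`r^0, …, r^(n+1)`), and a robber trajectory `r`. -/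
def copTraj {Y : Type*} {k : ℕ} (c0 : Fin k → Y)
    (σ : (n : ℕ) → (Fin (n + 2) → Y) → Fin k → Y) (r : ℕ → Y) : ℕ → Fin k → Y
  | 0 => c0
  | n + 1 => σ n fun i => r i

/-- The trajectory of the robber determined by his initial position `r0`, a robber strategy
`ρ` (where `ρ n` computes the robber's position at step `n+1` from the cops' positions
`c^0, …, c^n`), and a cop trajectory `c`. -/
def robTraj {Y : Type*} {k : ℕ} (r0 : Y)
    (ρ : (n : ℕ) → (Fin (n + 1) → Fin k → Y) → Y) (c : ℕ → Fin k → Y) : ℕ → Y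
  | 0 => r0
  | n + 1 => ρ n fun i => c i

/-- `k` cops have a winning strategy on `(Y,d)`: for every agility function and every initial
position chosen by the robber there is a cop strategy `σ`, assigning legal cop moves to every
history, such that against every legal robber trajectory the cops come arbitrarily close to
the robber. -/
def CopsWinWith (Y : Type*) (d : Y → Y → ℝ) (k : ℕ) : Prop :=
  ∀ τ : ℕ → ℝ, IsAgility τ → ∀ r0 : Y, ∀ c0 : Fin k → Y,
    ∃ σ : (n : ℕ) → (Fin (n + 2) → Y) → Fin k → Y,
      ∀ r : ℕ → Y, r 0 = r0 → (∀ n, d (r n) (r (n + 1)) ≤ τ (n + 1)) →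
        (∀ n i, d (copTraj c0 σ r n i) (copTraj c0 σ r (n + 1) i) ≤ τ (n + 1)) ∧
          (∀ ε : ℝ, 0 < ε → ∃ n i, d (r n) (copTraj c0 σ r n i) < ε)

/-- The cop number of `(Y,d)`, as an extended natural number: the least `k` such that `k`
cops have a winning strategy (`⊤` if there is no such `k`). -/
noncomputable def copNumber (Y : Type*) (d : Y → Y → ℝ) : ℕ∞ :=
  sInf {m : ℕ∞ | ∃ k : ℕ, m = (k : ℕ∞) ∧ CopsWinWith Y d k}

/-- The robber has a strategy against `k` cops on `(Y,d)` with agility function `τ` which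
guarantees that his moves are legal and that every cop always stays at distance `> ε` from
him, against every legal cop play. -/
def RobberWins (Y : Type*) (d : Y → Y → ℝ) (k : ℕ) (τ : ℕ → ℝ) (ε : ℝ) : Prop :=
  ∃ (r0 : Y) (c0 : Fin k → Y) (ρ : (n : ℕ) → (Fin (n + 1) → Fin k → Y) → Y),
    ∀ c : ℕ → Fin k → Y, c 0 = c0 → (∀ n i, d (c n i) (c (n + 1) i) ≤ τ (n + 1)) →
      (∀ n, d (robTraj r0 ρ c n) (robTraj r0 ρ c (n + 1)) ≤ τ (n + 1)) ∧
        (∀ n i, ε < d (robTraj r0 ρ c n) (c n i))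

/-!
The space is the ℓ^∞-product `X` of circles of circumference `2⁻¹ ^ n`. It is compact because
the circles shrink, and geodesic because every coordinate can move along a shortest arc of its
circle. Against `k` cops the robber keeps his `i`-th coordinate antipodal to the `i`-th
coordinate of cop `i`. Moving this target costs no more than the cops' last moves, so the robber
can follow it with the cops' speed `t`, while cop `i` stays at distance at least
`2⁻¹ ^ i / 2 - t`, which is positive for small `t`. A robber strategy with such a margin defeats
every cop strategy.
-/

section MetricSpace

variable {Y : Type*} [PseudoMetricSpace Y]

theorem compactD_dist [CompactSpace Y] : CompactD Y dist := fun u => by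
  obtain ⟨x, -, φ, hφ, hx⟩ := isCompact_univ.tendsto_subseq (x := u) fun _ => Set.mem_univ _
  exact ⟨x, φ, hφ, tendsto_iff_dist_tendsto_zero.1 hx⟩

theorem econt_dist_of_continuous {p : ℝ → Y} (hp : Continuous p) :
    econt (fun a b => ENNReal.ofReal (dist a b)) p := by
  intro t _ ε hε
  obtain ⟨e, -, he, heε⟩ := ENNReal.lt_iff_exists_real_btwn.1 hε
  obtain ⟨δ, hδ, hpδ⟩ := Metric.continuous_iff.1 hp t e (ENNReal.ofReal_pos.1 he)
  refine ⟨δ, hδ, fun t' _ ht' => lt_trans ?_ heε⟩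
  rw [ENNReal.ofReal_lt_ofReal_iff (ENNReal.ofReal_pos.1 he), dist_comm]
  exact hpδ t' (by rwa [Real.dist_eq])

theorem elen_dist_le_of_lipschitzWith {p : ℝ → Y} {K : NNReal} (hp : LipschitzWith K p) :
    elen (fun a b => ENNReal.ofReal (dist a b)) p ≤ ENNReal.ofReal K := by
  refine iSup_le fun ⟨m, u, hu, hu01⟩ => ?_
  have hstep : ∀ i, dist (p (u i)) (p (u (i + 1))) ≤ K * (u (i + 1) - u i) := fun i => by
    have := hp.dist_le_mul (u i) (u (i + 1))
    rwa [Real.dist_eq, abs_sub_comm, abs_of_nonneg (sub_nonneg.2 (hu i.le_succ))] at this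
  calc ∑ i ∈ Finset.range m, ENNReal.ofReal (dist (p (u i)) (p (u (i + 1))))
      ≤ ∑ i ∈ Finset.range m, ENNReal.ofReal (K * (u (i + 1) - u i)) :=
        Finset.sum_le_sum fun i _ => ENNReal.ofReal_le_ofReal (hstep i)
    _ = ENNReal.ofReal (K * (u m - u 0)) := by
        rw [← ENNReal.ofReal_sum_of_nonneg (f := fun i => K * (u (i + 1) - u i)) fun i _ =>
          mul_nonneg K.2 (sub_nonneg.2 (hu i.le_succ)), ← Finset.mul_sum, Finset.sum_range_sub]
    _ ≤ ENNReal.ofReal K := by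
        refine ENNReal.ofReal_le_ofReal (mul_le_of_le_one_right K.2 ?_)
        linarith [(hu01 m).2, (hu01 0).1]

theorem dist_le_elen_dist (p : ℝ → Y) :
    ENNReal.ofReal (dist (p 0) (p 1)) ≤ elen (fun a b => ENNReal.ofReal (dist a b)) p := by
  have hu : Monotone fun i : ℕ => min (i : ℝ) 1 :=
    (Nat.mono_cast (α := ℝ)).min monotone_const
  have hu01 : ∀ i : ℕ, min (i : ℝ) 1 ∈ Set.Icc (0 : ℝ) 1 :=
    fun i => ⟨le_min i.cast_nonneg zero_le_one, min_le_right _ _⟩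
  refine le_trans ?_ (le_iSup _ (⟨1, fun i => min (i : ℝ) 1, hu, hu01⟩ :
    ℕ × {u : ℕ → ℝ // Monotone u ∧ ∀ i, u i ∈ Set.Icc (0 : ℝ) 1}))
  simp

theorem isGeodesicD_of_lipschitzWith
    (h : ∀ x y : Y, ∃ p : ℝ → Y, p 0 = x ∧ p 1 = y ∧ LipschitzWith (nndist x y) p) :
    IsGeodesicD Y dist := fun x y => by
  obtain ⟨p, hp0, hp1, hp⟩ := h x y
  refine ⟨p, econt_dist_of_continuous hp.continuous, hp0, hp1, ?_⟩
  refine le_antisymm (elen_dist_le_of_lipschitzWith hp) ?_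
  simpa only [hp0, hp1] using dist_le_elen_dist p

end MetricSpace

theorem isMetricD_dist {Y : Type*} [MetricSpace Y] : IsMetricD Y dist :=
  ⟨dist_self, fun _ _ => dist_eq_zero.1, dist_comm, dist_triangle⟩

section Game

variable {Y : Type*} {d : Y → Y → ℝ} {k : ℕ}

theorem copTraj_congr (c0 : Fin k → Y) (σ : (n : ℕ) → (Fin (n + 2) → Y) → Fin k → Y)
    {r r' : ℕ → Y} {n : ℕ} (h : ∀ m ≤ n, r m = r' m) :
    copTraj c0 σ r n = copTraj c0 σ r' n := by
  cases n with
  | zero => rfl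
  | succ n => exact congrArg (σ n) (funext fun i => h i (Nat.lt_succ_iff.mp i.isLt))

noncomputable def moveIfLegal (d : Y → Y → ℝ) (s : ℝ) (a b : Y) : Y :=
  if d a b ≤ s then b else a

/-- The robber's play when he follows `ρ` against the cop strategy `σ`, skipping illegal moves.
The cops' history is read off the robber's history truncated after step `n`, which keeps the
recursion well founded (see `clampedPlay_succ`). -/
noncomputable def clampedPlay (d : Y → Y → ℝ) (τ : ℕ → ℝ) (r0 : Y) (c0 : Fin k → Y)
    (ρ : (n : ℕ) → (Fin (n + 1) → Fin k → Y) → Y)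
    (σ : (n : ℕ) → (Fin (n + 2) → Y) → Fin k → Y) : ℕ → Y
  | 0 => r0
  | n + 1 =>
    moveIfLegal d (τ (n + 1)) (clampedPlay d τ r0 c0 ρ σ n)
      (ρ n fun i => copTraj c0 σ
        (fun m => if m ≤ n then clampedPlay d τ r0 c0 ρ σ m else r0) i)

theorem clampedPlay_succ (τ : ℕ → ℝ) (r0 : Y) (c0 : Fin k → Y)
    (ρ : (n : ℕ) → (Fin (n + 1) → Fin k → Y) → Y)
    (σ : (n : ℕ) → (Fin (n + 2) → Y) → Fin k → Y) (n : ℕ) :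
    clampedPlay d τ r0 c0 ρ σ (n + 1) =
      moveIfLegal d (τ (n + 1)) (clampedPlay d τ r0 c0 ρ σ n)
        (ρ n fun i => copTraj c0 σ (clampedPlay d τ r0 c0 ρ σ) i) := by
  rw [clampedPlay]
  congr 2
  funext i
  exact copTraj_congr c0 σ fun m hm => if_pos (hm.trans (Nat.lt_succ_iff.mp i.isLt))

theorem dist_moveIfLegal_le (hd : ∀ x, d x x = 0) {s : ℝ} (hs : 0 ≤ s) (a b : Y) :
    d a (moveIfLegal d s a b) ≤ s := by
  unfold moveIfLegal
  split_ifs with h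
  · exact h
  · rwa [hd]

/-- Played against a cop strategy, the clamped robber strategy never skips a move, because
against a legal cop play its moves are legal. -/
theorem not_copsWinWith_of_robberWins (hd : ∀ x, d x x = 0) {τ : ℕ → ℝ} (hτ : IsAgility τ)
    {ε : ℝ} (hε : 0 < ε) (h : RobberWins Y d k τ ε) : ¬ CopsWinWith Y d k := by
  intro hcops
  obtain ⟨r0, c0, ρ, hρ⟩ := h
  obtain ⟨σ, hσ⟩ := hcops τ hτ r0 c0
  set r := clampedPlay d τ r0 c0 ρ σ with hr
  have hr_legal : ∀ n, d (r n) (r (n + 1)) ≤ τ (n + 1) := fun n => by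
    rw [hr, clampedPlay_succ]
    exact dist_moveIfLegal_le hd (hτ.1 _).le _ _
  obtain ⟨hc_legal, hclose⟩ := hσ r (by rw [hr, clampedPlay]) hr_legal
  obtain ⟨hrob_legal, hfar⟩ := hρ (copTraj c0 σ r) rfl hc_legal
  have hrob : ∀ n, robTraj r0 ρ (copTraj c0 σ r) n = r n := by
    intro n
    induction n with
    | zero => rw [hr, clampedPlay]; rfl
    | succ n ih =>
      have hmove := hrob_legal n
      rw [ih, robTraj] at hmove
      rw [hr, clampedPlay_succ, ← hr, moveIfLegal, if_pos hmove, robTraj]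
  obtain ⟨n, i, hn⟩ := hclose ε hε
  exact (hfar n i).not_gt (hrob n ▸ hn)

theorem copNumber_eq_top (h : ∀ k, ¬ CopsWinWith Y d k) :
    copNumber Y d = ⊤ :=
  sInf_eq_top.2 fun _ ⟨k, _, hk⟩ => (h k hk).elim

theorem isAgility_const {t : ℝ} (ht : 0 < t) : IsAgility fun _ => t :=
  ⟨fun _ => ht, fun h => ht.ne' ((summable_const_iff t).1 h)⟩

end Game

open scoped ENNReal

theorem AddCircle.exists_coe_eq_and_abs_eq_norm {p : ℝ} (z : AddCircle p) :
    ∃ v : ℝ, (v : AddCircle p) = z ∧ |v| = ‖z‖ := by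
  obtain ⟨x, rfl⟩ := QuotientAddGroup.mk_surjective z
  refine ⟨x - round (p⁻¹ * x) * p, ?_, (AddCircle.norm_eq p).symm⟩
  rw [AddCircle.coe_sub, ← zsmul_eq_mul, AddCircle.coe_zsmul, AddCircle.coe_period, smul_zero,
    sub_zero]

namespace lp

variable {ι : Type*} {E : ι → Type*} [∀ i, NormedAddCommGroup (E i)]

theorem dist_apply_le_dist (f g : lp E ∞) (i : ι) : dist (f i) (g i) ≤ dist f g := by
  simpa only [dist_eq_norm, coeFn_sub, Pi.sub_apply] using
    norm_apply_le_norm ENNReal.top_ne_zero (f - g) i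

theorem dist_le_of_forall_dist_apply_le {f g : lp E ∞} {C : ℝ} (hC : 0 ≤ C)
    (h : ∀ i, dist (f i) (g i) ≤ C) : dist f g ≤ C := by
  rw [dist_eq_norm]
  exact norm_le_of_forall_le hC fun i => by
    simpa only [coeFn_sub, Pi.sub_apply, dist_eq_norm] using h i

end lp

abbrev ShrinkingCircle (n : ℕ) : Type := AddCircle ((2 : ℝ)⁻¹ ^ n)

instance (n : ℕ) : Fact (0 < (2 : ℝ)⁻¹ ^ n) := ⟨by positivity⟩

abbrev ShrinkingTorus : Type := ↥(lp ShrinkingCircle ∞)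

namespace ShrinkingCircle

theorem norm_le {n : ℕ} (z : ShrinkingCircle n) : ‖z‖ ≤ (2 : ℝ)⁻¹ ^ n / 2 := by
  simpa only [abs_of_pos (Fact.out : (0 : ℝ) < 2⁻¹ ^ n)] using
    AddCircle.norm_le_half_period _ (Fact.out : (0 : ℝ) < 2⁻¹ ^ n).ne'

theorem memℓp_infty (f : ∀ n, ShrinkingCircle n) : Memℓp f ∞ :=
  _root_.memℓp_infty ⟨1, by
    rintro _ ⟨n, rfl⟩
    linarith [norm_le (f n), pow_le_one₀ (by norm_num : (0 : ℝ) ≤ 2⁻¹) (by norm_num) (n := n)]⟩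

end ShrinkingCircle

namespace ShrinkingTorus

def mk (f : ∀ n, ShrinkingCircle n) : ShrinkingTorus := ⟨f, ShrinkingCircle.memℓp_infty f⟩

@[simp]
theorem mk_apply (f : ∀ n, ShrinkingCircle n) (n : ℕ) : mk f n = f n := rfl

/-- The sup metric induces the product topology because the diameters `2⁻¹ ^ (n + 1)` of the
circles tend to `0`. -/
theorem continuous_mk : Continuous mk := by
  refine continuous_iff_continuousAt.2 fun f => Metric.tendsto_nhds.2 fun ε hε => ?_
  obtain ⟨N, hN⟩ : ∃ N : ℕ, (2 : ℝ)⁻¹ ^ N < ε / 2 :=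
    exists_pow_lt_of_lt_one (by linarith) (by norm_num)
  have hnear : ∀ᶠ g in 𝓝 f, ∀ n ∈ Finset.range N, dist (g n) (f n) < ε / 2 :=
    (Filter.eventually_all_finset _).2 fun n _ =>
      (continuous_apply n).continuousAt.eventually (Metric.ball_mem_nhds (f n) (by linarith))
  filter_upwards [hnear] with g hg
  refine (lp.dist_le_of_forall_dist_apply_le (C := ε / 2) (by linarith) fun n => ?_).trans_lt
    (by linarith)
  rw [mk_apply, mk_apply]
  rcases lt_or_ge n N with hn | hn
  · exact (hg n (Finset.mem_range.2 hn)).le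
  · calc dist (g n) (f n) ≤ ‖g n‖ + ‖f n‖ := dist_le_norm_add_norm _ _
      _ ≤ (2 : ℝ)⁻¹ ^ n := by
          linarith [ShrinkingCircle.norm_le (g n), ShrinkingCircle.norm_le (f n)]
      _ ≤ (2 : ℝ)⁻¹ ^ N := pow_le_pow_of_le_one (by norm_num) (by norm_num) hn
      _ ≤ ε / 2 := hN.le

theorem mk_surjective : Function.Surjective mk := fun x => ⟨x, rfl⟩

instance : CompactSpace ShrinkingTorus :=
  isCompact_univ_iff.1 (mk_surjective.range_eq ▸ isCompact_range continuous_mk)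

/-- Every coordinate moves along a shortest arc of its circle, all at proportional speeds. -/
theorem exists_lipschitzWith_path (x y : ShrinkingTorus) :
    ∃ p : ℝ → ShrinkingTorus, p 0 = x ∧ p 1 = y ∧ LipschitzWith (nndist x y) p := by
  choose v hv hvn using fun n => AddCircle.exists_coe_eq_and_abs_eq_norm (y n - x n)
  refine ⟨fun s => mk fun n => x n + ((s * v n : ℝ) : ShrinkingCircle n), ?_, ?_, ?_⟩
  · ext n; simp
  · ext n; simp [hv n]
  refine LipschitzWith.of_dist_le_mul fun s t => lp.dist_le_of_forall_dist_apply_le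
    (by positivity) fun n => ?_
  calc dist (x n + ((s * v n : ℝ) : ShrinkingCircle n))
        (x n + ((t * v n : ℝ) : ShrinkingCircle n))
      = ‖(((s - t) * v n : ℝ) : ShrinkingCircle n)‖ := by
        rw [dist_add_left, dist_eq_norm, ← AddCircle.coe_sub, sub_mul]
    _ ≤ |(s - t) * v n| := QuotientAddGroup.norm_mk_le_norm
    _ = dist s t * dist (y n) (x n) := by rw [abs_mul, hvn, Real.dist_eq, dist_eq_norm]
    _ ≤ nndist x y * dist s t := by
        rw [mul_comm, coe_nndist, dist_comm x]
        exact mul_le_mul_of_nonneg_right (lp.dist_apply_le_dist y x n) dist_nonneg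

theorem gameSpaceD : GameSpaceD ShrinkingTorus dist :=
  ⟨⟨0⟩, isMetricD_dist, compactD_dist, isGeodesicD_of_lipschitzWith exists_lipschitzWith_path⟩

variable {k : ℕ}

/-- The robber's answer to the cops' positions `C`. -/
noncomputable def antipode (C : Fin k → ShrinkingTorus) : ShrinkingTorus :=
  mk fun n => if h : n < k then C ⟨n, h⟩ n + (((2 : ℝ)⁻¹ ^ n / 2 : ℝ) : ShrinkingCircle n) else 0

theorem dist_antipode_le {C C' : Fin k → ShrinkingTorus} {t : ℝ} (ht : 0 ≤ t)
    (h : ∀ i, dist (C i) (C' i) ≤ t) : dist (antipode C) (antipode C') ≤ t := by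
  refine lp.dist_le_of_forall_dist_apply_le ht fun n => ?_
  simp only [antipode, mk_apply]
  split_ifs with hn
  · rw [dist_add_right]
    exact (lp.dist_apply_le_dist _ _ n).trans (h _)
  · rwa [dist_self]

theorem half_period_sub_dist_le_dist_antipode (C C' : Fin k → ShrinkingTorus) (i : Fin k) :
    (2 : ℝ)⁻¹ ^ (i : ℕ) / 2 - dist (C i) (C' i) ≤ dist (antipode C) (C' i) := by
  have hanti : antipode C i = C i i + (((2 : ℝ)⁻¹ ^ (i : ℕ) / 2 : ℝ) : ShrinkingCircle i) := by
    simp only [antipode, mk_apply, dif_pos i.isLt, Fin.eta]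
  have hhalf : dist (antipode C i) (C i i) = (2 : ℝ)⁻¹ ^ (i : ℕ) / 2 := by
    rw [hanti, dist_self_add_left, AddCircle.norm_half_period_eq,
      abs_of_pos (Fact.out : (0 : ℝ) < 2⁻¹ ^ (i : ℕ))]
  linarith [dist_triangle (antipode C i) (C' i i) (C i i), dist_comm (C' i i) (C i i),
    lp.dist_apply_le_dist (C i) (C' i) i, lp.dist_apply_le_dist (antipode C) (C' i) i]

/-- Standing at the antipode of the cops' last positions keeps cop `i` at distance at least
`2⁻¹ ^ i / 2 - t` after its next move of size at most `t`. -/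
theorem robberWins (k : ℕ) :
    RobberWins ShrinkingTorus dist k (fun _ => (2 : ℝ)⁻¹ ^ k / 4) ((2 : ℝ)⁻¹ ^ k / 4) := by
  set t : ℝ := (2 : ℝ)⁻¹ ^ k / 4 with ht
  set ρ : (n : ℕ) → (Fin (n + 1) → Fin k → ShrinkingTorus) → ShrinkingTorus :=
    fun n h => antipode (h (Fin.last n))
  set C₀ : Fin k → ShrinkingTorus := 0
  refine ⟨antipode C₀, C₀, ρ, fun c hc0 hc => ?_⟩
  have hrob : ∀ n, robTraj (antipode C₀) ρ c n = antipode (c (n - 1)) := by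
    rintro (_ | n)
    · rw [robTraj, Nat.zero_sub, hc0]
    · rfl
  have hstep : ∀ n i, dist (c (n - 1) i) (c n i) ≤ t := by
    rintro (_ | n) i
    · rw [dist_self]; positivity
    · exact hc n i
  refine ⟨fun n => ?_, fun n i => ?_⟩
  · rw [hrob, hrob]
    exact dist_antipode_le (by positivity) (hstep n)
  · have hi : (2 : ℝ)⁻¹ ^ k < 2⁻¹ ^ (i : ℕ) :=
      pow_lt_pow_right_of_lt_one₀ (by norm_num) (by norm_num) i.isLt
    rw [hrob]
    linarith [half_period_sub_dist_le_dist_antipode (c (n - 1)) (c n) i, hstep n i, ht]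

end ShrinkingTorus

/-- There exists a compact geodesic metric space `X` with infinite cop
number: for every `k`, `k` cops do not have a winning strategy. Moreover for every `k` the
robber has a strategy against `k` cops using a constant agility function which keeps all
cops at distance bounded away from `0`. -/
theorem exists_game_space_with_infinite_cop_number :
    ∃ (X : Type) (d : X → X → ℝ), GameSpaceD X d ∧
      copNumber X d = ⊤ ∧ (∀ k : ℕ, ¬ CopsWinWith X d k) ∧
      (∀ k : ℕ, ∃ t ε : ℝ, 0 < t ∧ 0 < ε ∧ RobberWins X d k (fun _ => t) ε) := by
  have ht : ∀ k : ℕ, 0 < (2 : ℝ)⁻¹ ^ k / 4 := fun k => by positivity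
  have hcops : ∀ k, ¬ CopsWinWith ShrinkingTorus dist k := fun k =>
    not_copsWinWith_of_robberWins dist_self (isAgility_const (ht k)) (ht k)
      (ShrinkingTorus.robberWins k)
  exact ⟨ShrinkingTorus, dist, ShrinkingTorus.gameSpaceD, copNumber_eq_top hcops, hcops,
    fun k => ⟨_, _, ht k, ht k, ShrinkingTorus.robberWins k⟩⟩
end

section
/- Let (X,d) be a game space, S ⊆ X a nonempty compact subset, and h > 0. Then for every point x of X ∪ cyl(h,S) ⊆ X_{h,S}, the distance from x to its trace equals its height: d'(x, π(x)) = hei(x). -/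
/-!
Game of Cops and Robber on metric spaces, following Mohar, formalized relative to an
explicit distance function `d : Y → Y → ℝ`.
-/

open Set Filter Topology

/-!
The hat construction `X_{h,S}` of the paper: given a metric space `X`, a subset `S ⊆ X` and
`h > 0`, we glue onto `X` the hat over `S`, consisting of the cylinder `S × [0,h]` with the
`ℓ₁` metric and the top, a cone over `S` of height `H = h + diam S`.  The resulting space is
equipped with the induced length metric: distances are infima of lengths of piecewise paths,
each piece lying in one part and measured with that part's metric.
-/

section Hat

variable {X : Type*} [MetricSpace X]

/-- Points of the cylinder `S × [0,h]`. -/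
abbrev CylPt (S : Set X) (h : ℝ) : Type _ := ↥S × ↥(Set.Icc (0 : ℝ) h)

/-- Points of the (un-collapsed) top `S × [0, h + diam S]`. -/
abbrev TopPt (S : Set X) (h : ℝ) : Type _ := ↥S × ↥(Set.Icc (0 : ℝ) (h + Metric.diam S))

/-- The disjoint union of the three parts of `X_{h,S}`: the space `X`, the cylinder, and
the top. -/
abbrev PrePt (S : Set X) (h : ℝ) : Type _ := X ⊕ (CylPt S h ⊕ TopPt S h)

/-- The `ℓ₁` metric `d₁` on the cylinder. -/
noncomputable def cylDist {S : Set X} {h : ℝ} (p q : CylPt S h) : ℝ :=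
  dist (p.1 : X) (q.1 : X) + |(p.2 : ℝ) - (q.2 : ℝ)|

/-- The metric `d₂` on the top: the quotient pseudometric of the `ℓ₁` metric on
`S × [0,H]`, `H = h + diam S`, under collapsing the layer `S × {H}` to a point. -/
noncomputable def topDist {S : Set X} {h : ℝ} (p q : TopPt S h) : ℝ :=
  min (dist (p.1 : X) (q.1 : X) + |(p.2 : ℝ) - (q.2 : ℝ)|)
    ((h + Metric.diam S - (p.2 : ℝ)) + (h + Metric.diam S - (q.2 : ℝ)))

/-- The part-wise cost on the disjoint union: within one part, the metric of that part;
`⊤` across different parts. -/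
noncomputable def preDist (S : Set X) (h : ℝ) : PrePt S h → PrePt S h → ENNReal
  | Sum.inl x, Sum.inl y => ENNReal.ofReal (dist x y)
  | Sum.inr (Sum.inl p), Sum.inr (Sum.inl q) => ENNReal.ofReal (cylDist p q)
  | Sum.inr (Sum.inr p), Sum.inr (Sum.inr q) => ENNReal.ofReal (topDist p q)
  | _, _ => ⊤

/-- The gluing relation defining `X_{h,S}`: each `s ∈ S` is identified with the point
`(s,0)` of the cylinder; the layer `S × {h}` of the cylinder is identified with the layer
`S × {0}` of the top; and the whole layer `S × {H}` of the top is collapsed to one point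
(the cone point `z`). -/
inductive Glue (S : Set X) (h : ℝ) : PrePt S h → PrePt S h → Prop
  | base (s : ↥S) (t : ↥(Set.Icc (0 : ℝ) h)) (ht : (t : ℝ) = 0) :
      Glue S h (Sum.inl (s : X)) (Sum.inr (Sum.inl (s, t)))
  | mid (s : ↥S) (t : ↥(Set.Icc (0 : ℝ) h)) (u : ↥(Set.Icc (0 : ℝ) (h + Metric.diam S)))
      (ht : (t : ℝ) = h) (hu : (u : ℝ) = 0) :
      Glue S h (Sum.inr (Sum.inl (s, t))) (Sum.inr (Sum.inr (s, u)))
  | apex (p q : TopPt S h) (hp : (p.2 : ℝ) = h + Metric.diam S)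
      (hq : (q.2 : ℝ) = h + Metric.diam S) :
      Glue S h (Sum.inr (Sum.inr p)) (Sum.inr (Sum.inr q))

/-- The underlying set of `X_{h,S}`: the quotient of the disjoint union by the gluing. -/
abbrev GlueSp (S : Set X) (h : ℝ) : Type _ := Quot (Glue S h)

end Hat

/-- A piecewise path between two points of a glued space `Quot R`: a finite sequence of
paths, each continuous within a single part (with respect to the part-wise cost `c`), with
consecutive endpoints glued. -/
structure PiecewisePath {Y : Type*} (c : Y → Y → ENNReal) (R : Y → Y → Prop)
    (a b : Quot R) where
  m : ℕ
  piece : Fin (m + 1) → ℝ → Y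
  cont : ∀ i, econt c (piece i)
  first : Quot.mk R (piece 0 0) = a
  last : Quot.mk R (piece (Fin.last m) 1) = b
  link : ∀ i : Fin m, Quot.mk R (piece i.castSucc 1) = Quot.mk R (piece i.succ 0)

/-- The length of a piecewise path: the sum of the lengths of its pieces, each measured with
the corresponding part's metric. -/
noncomputable def PiecewisePath.len {Y : Type*} {c : Y → Y → ENNReal} {R : Y → Y → Prop}
    {a b : Quot R} (P : PiecewisePath c R a b) : ENNReal :=
  ∑ i : Fin (P.m + 1), elen c (P.piece i)

/-- The induced length metric on a glued space: the infimum of lengths of piecewise paths. -/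
noncomputable def glueDist {Y : Type*} (c : Y → Y → ENNReal) (R : Y → Y → Prop)
    (a b : Quot R) : ENNReal :=
  ⨅ P : PiecewisePath c R a b, P.len

section Hat2

variable {X : Type*} [MetricSpace X]

/-- The induced length metric `d'` on `X_{h,S}`, with values in `[0,∞]`. -/
noncomputable def hatDistE (S : Set X) (h : ℝ) (a b : GlueSp S h) : ENNReal :=
  glueDist (preDist S h) (Glue S h) a b

/-- The induced length metric `d'` on `X_{h,S}`, as a real-valued function. -/
noncomputable def hatDist (S : Set X) (h : ℝ) (a b : GlueSp S h) : ℝ :=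
  (hatDistE S h a b).toReal

/-- The canonical inclusion `X ↪ X_{h,S}`. -/
def iotaX (S : Set X) (h : ℝ) (x : X) : GlueSp S h := Quot.mk _ (Sum.inl x)

end Hat2

section Trace

variable {X : Type*} [MetricSpace X]

/-- Points of the subset `X ∪ cyl(h,S)` of `X_{h,S}` (before gluing). -/
abbrev BasePt (S : Set X) (h : ℝ) : Type _ := X ⊕ CylPt S h

/-- The trace `π` of a point of `X ∪ cyl(h,S)`: `π(x) = x` for `x ∈ X` and `π((s,t)) = s`
for cylinder points. -/
def trace {S : Set X} {h : ℝ} : BasePt S h → X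
  | Sum.inl x => x
  | Sum.inr p => (p.1 : X)

/-- The height of a point of `X ∪ cyl(h,S)`: `0` on `X`, and `t` at a cylinder point
`(s,t)`. -/
def height {S : Set X} {h : ℝ} : BasePt S h → ℝ
  | Sum.inl _ => 0
  | Sum.inr p => (p.2 : ℝ)

/-- The canonical inclusion `X ∪ cyl(h,S) → X_{h,S}`. -/
def baseEmb {S : Set X} {h : ℝ} : BasePt S h → GlueSp S h
  | Sum.inl x => Quot.mk _ (Sum.inl x)
  | Sum.inr p => Quot.mk _ (Sum.inr (Sum.inl p))

end Trace

/-!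
The cylinder point `(s,t)` is joined to `s` by the vertical segment, of length `t`.
Conversely, the height function (`0` on `X`, `t` on the cylinder, `h + u` on the top) is
compatible with the gluing and `1`-Lipschitz on each part, so it is `1`-Lipschitz along
every piecewise path, and the length of any path from `(s,t)` to `s` is at least `t`.
-/

section PathLength

variable {Y : Type*} {c : Y → Y → ENNReal}

lemma le_elen (p : ℝ → Y) : c (p 0) (p 1) ≤ elen c p := by
  let u : ℕ → ℝ := fun i => min (i : ℝ) 1
  have hu : Monotone u ∧ ∀ i, u i ∈ Set.Icc (0 : ℝ) 1 :=
    ⟨fun i j hij => min_le_min_right _ (Nat.cast_le.mpr hij),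
      fun i => ⟨le_min (Nat.cast_nonneg _) zero_le_one, min_le_right _ _⟩⟩
  refine le_trans ?_ (le_iSup (fun q : ℕ × {u : ℕ → ℝ // Monotone u ∧ ∀ i, u i ∈ Set.Icc 0 1} =>
    ∑ i ∈ Finset.range q.1, c (p (q.2.1 i)) (p (q.2.1 (i + 1)))) (1, ⟨u, hu⟩))
  simp [u]

lemma elen_le_of_antitone {p : ℝ → Y} {v : ℝ → ℝ} (hv : Antitone v)
    (hc : ∀ a b, a ≤ b → c (p a) (p b) ≤ ENNReal.ofReal (v a - v b)) :
    elen c p ≤ ENNReal.ofReal (v 0 - v 1) := by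
  refine iSup_le ?_
  rintro ⟨n, u, hu, hu01⟩
  have hstep : ∀ i, 0 ≤ v (u i) - v (u (i + 1)) := fun i => sub_nonneg.2 (hv (hu i.le_succ))
  calc ∑ i ∈ Finset.range n, c (p (u i)) (p (u (i + 1)))
      ≤ ∑ i ∈ Finset.range n, ENNReal.ofReal (v (u i) - v (u (i + 1))) :=
        Finset.sum_le_sum fun i _ => hc _ _ (hu i.le_succ)
    _ = ENNReal.ofReal (v (u 0) - v (u n)) := by
        rw [← ENNReal.ofReal_sum_of_nonneg fun i _ => hstep i,
          Finset.sum_range_sub' (fun i => v (u i))]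
    _ ≤ ENNReal.ofReal (v 0 - v 1) :=
        ENNReal.ofReal_le_ofReal (by linarith [hv (hu01 0).1, hv (hu01 n).2])

lemma econt_of_le_mul_abs {p : ℝ → Y} {K : ℝ}
    (hc : ∀ a b, c (p a) (p b) ≤ ENNReal.ofReal (K * |a - b|)) : econt c p := by
  intro a _ ε hε
  obtain ⟨e, -, he0, heε⟩ := ENNReal.lt_iff_exists_real_btwn.mp hε
  have he : 0 < e := ENNReal.ofReal_pos.mp he0
  have hK : 0 < |K| + 1 := by positivity
  refine ⟨e / (|K| + 1), div_pos he hK, fun b _ hab => (hc a b).trans_lt ?_⟩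
  refine lt_of_le_of_lt (ENNReal.ofReal_le_ofReal ?_) heε
  rw [abs_sub_comm] at hab
  calc K * |a - b| ≤ |K| * (e / (|K| + 1)) :=
        (le_abs_self _).trans (by rw [abs_mul, abs_abs]; gcongr)
    _ ≤ e := by rw [mul_div_assoc']; exact (div_le_iff₀ hK).2 (by nlinarith)

end PathLength

section GlueDist

variable {Y : Type*} {c : Y → Y → ENNReal} {R : Y → Y → Prop}

def PiecewisePath.ofPath (p : ℝ → Y) (hp : econt c p) :
    PiecewisePath c R (Quot.mk R (p 0)) (Quot.mk R (p 1)) where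
  m := 0
  piece := fun _ => p
  cont := fun _ => hp
  first := rfl
  last := rfl
  link := fun i => i.elim0

lemma glueDist_mk_le_elen (p : ℝ → Y) (hp : econt c p) :
    glueDist c R (Quot.mk R (p 0)) (Quot.mk R (p 1)) ≤ elen c p :=
  (iInf_le _ (PiecewisePath.ofPath p hp)).trans_eq (Fin.sum_univ_one _)

lemma glueDist_mk_self {y : Y} (hy : c y y = 0) :
    glueDist c R (Quot.mk R y) (Quot.mk R y) = 0 := by
  refine le_antisymm ?_ bot_le
  have hcont : econt c fun _ => y := fun _ _ ε hε => ⟨1, one_pos, fun _ _ _ => hy ▸ hε⟩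
  exact (glueDist_mk_le_elen (R := R) _ hcont).trans_eq (by simp [elen, hy])

lemma Fin.sum_sub_eq_of_chain {m : ℕ} (a b : Fin (m + 1) → ℝ)
    (hab : ∀ i : Fin m, b i.castSucc = a i.succ) :
    ∑ i, (a i - b i) = a 0 - b (Fin.last m) := by
  rw [Finset.sum_sub_distrib, Fin.sum_univ_succ a, Fin.sum_univ_castSucc b]
  simp only [hab]
  ring

lemma PiecewisePath.ofReal_abs_sub_le_len {f : Y → ℝ} (hR : ∀ a b, R a b → f a = f b)
    (hf : ∀ a b, ENNReal.ofReal |f a - f b| ≤ c a b) {a b : Quot R}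
    (P : PiecewisePath c R a b) :
    ENNReal.ofReal |Quot.lift f hR a - Quot.lift f hR b| ≤ P.len := by
  have hchain : ∀ i : Fin P.m, f (P.piece i.castSucc 1) = f (P.piece i.succ 0) := fun i =>
    congrArg (Quot.lift f hR) (P.link i)
  rw [← congrArg (Quot.lift f hR) P.first, ← congrArg (Quot.lift f hR) P.last,
    Quot.lift_mk f hR, Quot.lift_mk f hR,
    ← Fin.sum_sub_eq_of_chain (fun i => f (P.piece i 0)) (fun i => f (P.piece i 1)) hchain]
  calc ENNReal.ofReal |∑ i, (f (P.piece i 0) - f (P.piece i 1))|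
      ≤ ENNReal.ofReal (∑ i, |f (P.piece i 0) - f (P.piece i 1)|) :=
        ENNReal.ofReal_le_ofReal (Finset.abs_sum_le_sum_abs _ _)
    _ = ∑ i, ENNReal.ofReal |f (P.piece i 0) - f (P.piece i 1)| :=
        ENNReal.ofReal_sum_of_nonneg fun _ _ => abs_nonneg _
    _ ≤ P.len := Finset.sum_le_sum fun i _ => (hf _ _).trans (le_elen _)

lemma ofReal_abs_sub_le_glueDist {f : Y → ℝ} (hR : ∀ a b, R a b → f a = f b)
    (hf : ∀ a b, ENNReal.ofReal |f a - f b| ≤ c a b) (a b : Quot R) :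
    ENNReal.ofReal |Quot.lift f hR a - Quot.lift f hR b| ≤ glueDist c R a b :=
  le_iInf fun P => P.ofReal_abs_sub_le_len hR hf

end GlueDist

section Height

variable {X : Type*} [MetricSpace X] {S : Set X} {h : ℝ}

def preHeight (S : Set X) (h : ℝ) : PrePt S h → ℝ
  | Sum.inl _ => 0
  | Sum.inr (Sum.inl p) => p.2
  | Sum.inr (Sum.inr p) => h + p.2

lemma preHeight_eq_of_glue {a b : PrePt S h} (hab : Glue S h a b) :
    preHeight S h a = preHeight S h b := by
  cases hab <;> simp_all [preHeight]

lemma ofReal_abs_sub_preHeight_le (a b : PrePt S h) :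
    ENNReal.ofReal |preHeight S h a - preHeight S h b| ≤ preDist S h a b := by
  rcases a with x | p | p <;> rcases b with y | q | q <;>
    simp only [preDist, preHeight, le_top] <;> refine ENNReal.ofReal_le_ofReal ?_
  · simp [dist_nonneg]
  · exact le_add_of_nonneg_left dist_nonneg
  · have hp := p.2.2.2
    have hq := q.2.2.2
    rw [add_sub_add_left_eq_sub, topDist]
    exact le_min (le_add_of_nonneg_left dist_nonneg) (abs_sub_le_iff.2 ⟨by linarith, by linarith⟩)

lemma ofReal_height_le_hatDistE (s : ↥S) (t : ↥(Set.Icc (0 : ℝ) h)) :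
    ENNReal.ofReal t ≤ hatDistE S h (Quot.mk _ (Sum.inr (Sum.inl (s, t)))) (iotaX S h s) := by
  simpa [abs_of_nonneg t.2.1, hatDistE, iotaX, preHeight] using
    ofReal_abs_sub_le_glueDist (c := preDist S h) (R := Glue S h)
      (fun _ _ => preHeight_eq_of_glue) ofReal_abs_sub_preHeight_le
      (Quot.mk _ (Sum.inr (Sum.inl (s, t)))) (iotaX S h s)

end Height

section VerticalSegment

variable {X : Type*} [MetricSpace X] {S : Set X} {h : ℝ}

/-- The height along the segment from `(s,t)` down to `(s,0)`; pieces of paths are maps on all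
of `ℝ`, hence the clamping. -/
noncomputable def segmentHeight (t : ↥(Set.Icc (0 : ℝ) h)) (u : ℝ) : ↥(Set.Icc (0 : ℝ) h) :=
  Set.projIcc 0 h (t.2.1.trans t.2.2) (t * (1 - u))

lemma antitone_segmentHeight (t : ↥(Set.Icc (0 : ℝ) h)) :
    Antitone fun u => (segmentHeight t u : ℝ) := fun a b hab =>
  Set.monotone_projIcc _ (mul_le_mul_of_nonneg_left (by linarith) t.2.1)

lemma abs_sub_segmentHeight_le (t : ↥(Set.Icc (0 : ℝ) h)) (a b : ℝ) :
    |(segmentHeight t a : ℝ) - segmentHeight t b| ≤ t * |a - b| := by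
  have := (LipschitzWith.projIcc (t.2.1.trans t.2.2)).dist_le_mul (t * (1 - a)) (t * (1 - b))
  simp only [NNReal.coe_one, one_mul, Subtype.dist_eq, Real.dist_eq] at this
  rwa [← mul_sub, sub_sub_sub_cancel_left, abs_mul, abs_of_nonneg t.2.1, abs_sub_comm b] at this

lemma segmentHeight_zero (t : ↥(Set.Icc (0 : ℝ) h)) : segmentHeight t 0 = t := by
  simp [segmentHeight, Set.projIcc_of_mem _ t.2]

lemma segmentHeight_one (t : ↥(Set.Icc (0 : ℝ) h)) : (segmentHeight t 1 : ℝ) = 0 := by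
  simp [segmentHeight, Set.projIcc_left]

noncomputable def verticalSegment (s : ↥S) (t : ↥(Set.Icc (0 : ℝ) h)) (u : ℝ) : PrePt S h :=
  Sum.inr (Sum.inl (s, segmentHeight t u))

lemma preDist_verticalSegment (s : ↥S) (t : ↥(Set.Icc (0 : ℝ) h)) (a b : ℝ) :
    preDist S h (verticalSegment s t a) (verticalSegment s t b) =
      ENNReal.ofReal |(segmentHeight t a : ℝ) - segmentHeight t b| := by
  simp [verticalSegment, preDist, cylDist]

lemma hatDistE_le_ofReal_height (s : ↥S) (t : ↥(Set.Icc (0 : ℝ) h)) :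
    hatDistE S h (Quot.mk _ (Sum.inr (Sum.inl (s, t)))) (iotaX S h s) ≤ ENNReal.ofReal t := by
  have hstart : verticalSegment s t 0 = Sum.inr (Sum.inl (s, t)) := by
    simp [verticalSegment, segmentHeight_zero]
  have hend : Quot.mk (Glue S h) (verticalSegment s t 1) = iotaX S h s :=
    (Quot.sound (Glue.base s _ (segmentHeight_one t))).symm
  have hlen := elen_le_of_antitone (c := preDist S h) (p := verticalSegment s t)
    (antitone_segmentHeight t) fun a b hab => by
      rw [preDist_verticalSegment, abs_of_nonneg (sub_nonneg.2 (antitone_segmentHeight t hab))]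
  rw [segmentHeight_zero, segmentHeight_one, sub_zero] at hlen
  have hcont : econt (preDist S h) (verticalSegment s t) :=
    econt_of_le_mul_abs fun a b => by
      rw [preDist_verticalSegment]
      exact ENNReal.ofReal_le_ofReal (abs_sub_segmentHeight_le t a b)
  rw [← hstart, ← hend]
  exact (glueDist_mk_le_elen _ hcont).trans hlen

end VerticalSegment

theorem dist_trace_eq_height_general {X : Type*} [MetricSpace X] (S : Set X) (h : ℝ) :
    ∀ w : BasePt S h, hatDist S h (baseEmb w) (iotaX S h (trace w)) = height w := by
  rintro (x | ⟨s, t⟩)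
  · have hx : preDist S h (Sum.inl x) (Sum.inl x) = 0 := by simp [preDist]
    simp [hatDist, hatDistE, baseEmb, iotaX, trace, height, glueDist_mk_self hx]
  · have hE := le_antisymm (hatDistE_le_ofReal_height s t) (ofReal_height_le_hatDistE s t)
    simp only [hatDist, baseEmb, trace, height]
    rw [hE, ENNReal.toReal_ofReal t.2.1]

/-- equation (hei) of the paper. In `X_{h,S}`, every point `x` of
`X ∪ cyl(h,S)` satisfies `d'(x, π(x)) = hei(x)`. -/
theorem dist_trace_eq_height {X : Type*} [MetricSpace X]
    (hX : GameSpaceD X (fun x y => dist x y)) (S : Set X) (hS : IsCompact S)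
    (hSne : S.Nonempty) (h : ℝ) (hh : 0 < h) :
    ∀ w : BasePt S h, hatDist S h (baseEmb w) (iotaX S h (trace w)) = height w :=
  dist_trace_eq_height_general S h
end
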